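/- Let U: L → T be a fully faithful triangulated functor between triangulated categories with products, admitting a right adjoint F: T → L. If there is a set C of objects of T such that every object of T is C-cofiltered, then every object of L is F(C)-cofiltered. (In particular, if T^op is deconstructible then L^op is deconstructible.) -/

import Mathlib

open CategoryTheory CategoryTheory.Limits CategoryTheory.Pretriangulated

universe v u v' u'

section

variable {D : Type u} [Category.{v} D]

def ProdCls (𝒮 : Set D) : Set D :=
  {Z | ∃ (ι : Type (max u v)) (f : ι → D) (_ : ∀ i, f i ∈ 𝒮) (_ : HasProduct f)
    (r : (∏ᶜ f) ⟶ Z) (s : Z ⟶ ∏ᶜ f), s ≫ r = 𝟙 Z}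

/-- `X` is `𝒮`-cofiltered: `X` is a homotopy limit (i.e. fits into the defining
triangle `X ⟶ ∏ Xₙ ⟶ ∏ Xₙ ⟶ ΣX`) of an inverse tower `(Xₙ)` with `X₀ ∈ Prod 𝒮` and
each `X_{n+1}` lying in a triangle `Pₙ ⟶ X_{n+1} ⟶ Xₙ ⟶ ΣPₙ` with `Pₙ ∈ Prod 𝒮`. -/
def IsCofiltered' [Preadditive D] [HasZeroObject D] [HasShift D ℤ]
    [∀ n : ℤ, (shiftFunctor D n).Additive] [Pretriangulated D]
    [HasCountableProducts D] (𝒮 : Set D) (X : D) : Prop :=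
  ∃ (Xs : ℕ → D) (d : ∀ n, Xs (n + 1) ⟶ Xs n), Xs 0 ∈ ProdCls 𝒮 ∧
    (∀ n, ∃ (P : D) (a : P ⟶ Xs (n + 1)) (b : Xs (n + 1) ⟶ Xs n) (c : Xs n ⟶ P⟦(1 : ℤ)⟧),
      b = d n ∧ Triangle.mk a b c ∈ (distTriang D) ∧ P ∈ ProdCls 𝒮) ∧
    ∃ (π : X ⟶ ∏ᶜ Xs) (δ : (∏ᶜ Xs) ⟶ X⟦(1 : ℤ)⟧),
      Triangle.mk π (Pi.lift fun n => Pi.π Xs n - (Pi.π Xs (n + 1) ≫ d n)) δ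
        ∈ (distTriang D)

end

section Aux

universe vv uu

variable {C : Type uu} [Category.{vv} C]

lemma aux_surj_one_sub_shift [Preadditive C] {A : C} (ee : A ⟶ A) (hee : ee ≫ ee = ee)
    [HasProduct (fun _ : ℕ => A)] {W : C} (b : W ⟶ ∏ᶜ (fun _ : ℕ => A)) :
    ∃ a : W ⟶ ∏ᶜ (fun _ : ℕ => A),
      a ≫ (𝟙 _ - Pi.lift (fun n => Pi.π (fun _ : ℕ => A) (n + 1) ≫ ee)) = b := by
  refine ⟨Pi.lift (fun n => b ≫ Pi.π _ n - (b ≫ Pi.π _ n) ≫ ee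
    - ∑ k ∈ Finset.range n, (b ≫ Pi.π _ k) ≫ ee), ?_⟩
  apply Pi.hom_ext
  intro n
  rw [Category.assoc, Preadditive.sub_comp, Category.id_comp, Pi.lift_π,
    Preadditive.comp_sub, Pi.lift_π, ← Category.assoc, Pi.lift_π,
    Preadditive.sub_comp, Preadditive.sub_comp, Preadditive.sum_comp]
  simp only [Category.assoc, hee, Finset.sum_range_succ]
  abel

theorem aux_isIdempotentComplete
    [Preadditive C] [HasZeroObject C] [HasShift C ℤ]
    [∀ n : ℤ, (shiftFunctor C n).Additive] [Pretriangulated C]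
    [HasCountableProducts C] : IsIdempotentComplete C := by
  constructor
  intro X e he
  set P : C := ∏ᶜ (fun _ : ℕ => X) with hP
  set s : P ⟶ P := Pi.lift fun n => Pi.π (fun _ : ℕ => X) (n + 1) ≫ e with hs
  set t : P ⟶ P := 𝟙 P - s with ht
  obtain ⟨H, ι, δ, hT⟩ := distinguished_cocone_triangle₁ t
  have hι : ι ≫ t = 0 := comp_distTriang_mor_zero₁₂ _ hT
  have hιs : ι ≫ s = ι := by
    rw [ht, Preadditive.comp_sub, Category.comp_id, sub_eq_zero] at hι
    exact hι.symm
  have hstep : ∀ n, ι ≫ Pi.π (fun _ : ℕ => X) n = (ι ≫ Pi.π (fun _ : ℕ => X) (n + 1)) ≫ e := by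
    intro n
    conv_lhs => rw [← hιs]
    rw [Category.assoc, hs, Pi.lift_π, ← Category.assoc]
  have hsucc : ∀ n, ι ≫ Pi.π (fun _ : ℕ => X) n = ι ≫ Pi.π (fun _ : ℕ => X) (n + 1) := by
    intro n
    rw [hstep n, hstep (n + 1), Category.assoc, he]
  have hconst : ∀ n, ι ≫ Pi.π (fun _ : ℕ => X) n = ι ≫ Pi.π (fun _ : ℕ => X) 0 := by
    intro n
    induction n with
    | zero => rfl
    | succ k ih => rw [← hsucc k, ih]
  have hkey : (ι ≫ Pi.π (fun _ : ℕ => X) 0) ≫ e = ι ≫ Pi.π (fun _ : ℕ => X) 0 := by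
    rw [hstep 0, Category.assoc, he]
  -- the section
  set g : X ⟶ P := Pi.lift (fun _ => e) with hg
  have hgt : g ≫ t = 0 := by
    apply Pi.hom_ext
    intro n
    rw [ht, Category.assoc, Preadditive.sub_comp, Category.id_comp, Preadditive.comp_sub,
      Pi.lift_π, hs, Pi.lift_π, ← Category.assoc, Pi.lift_π, he, zero_comp, sub_self]
  obtain ⟨r, hr'⟩ : ∃ r : X ⟶ H, g = r ≫ ι := Triangle.coyoneda_exact₂ _ hT g hgt
  have hr : g = r ≫ ι := hr'
  set p : H ⟶ X := ι ≫ Pi.π (fun _ : ℕ => X) 0 with hp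
  -- surjectivity of composition with t⟦-1⟧
  have sur : ∀ {W : C} (w : W ⟶ ((shiftFunctor C (-1 : ℤ)).obj P)),
      ∃ v : W ⟶ ((shiftFunctor C (-1 : ℤ)).obj P),
        v ≫ (shiftFunctor C (-1 : ℤ)).map t = w := by
    intro W w
    have h1 : ∀ n, t ≫ Pi.π (fun _ : ℕ => X) n
        = Pi.π (fun _ : ℕ => X) n - Pi.π (fun _ : ℕ => X) (n + 1) ≫ e := by
      intro n
      rw [ht, Preadditive.sub_comp, Category.id_comp, hs, Pi.lift_π]
    have hconj : (shiftFunctor C (-1 : ℤ)).map t ≫ piComparison (shiftFunctor C (-1 : ℤ)) (fun _ : ℕ => X) =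
        piComparison (shiftFunctor C (-1 : ℤ)) (fun _ : ℕ => X) ≫
          (𝟙 _ - Pi.lift (fun n => Pi.π (fun _ : ℕ => (shiftFunctor C (-1 : ℤ)).obj X) (n + 1)
            ≫ (shiftFunctor C (-1 : ℤ)).map e)) := by
      apply Pi.hom_ext
      intro n
      rw [Category.assoc, piComparison_comp_π, ← Functor.map_comp, h1 n, Functor.map_sub,
        Functor.map_comp]
      rw [Category.assoc, Preadditive.sub_comp, Category.id_comp, Pi.lift_π,
        Preadditive.comp_sub, piComparison_comp_π, ← Category.assoc, piComparison_comp_π]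
    obtain ⟨a, ha⟩ := aux_surj_one_sub_shift ((shiftFunctor C (-1 : ℤ)).map e)
      (by rw [← Functor.map_comp, he]) (w ≫ piComparison (shiftFunctor C (-1 : ℤ)) (fun _ : ℕ => X))
    refine ⟨a ≫ inv (piComparison (shiftFunctor C (-1 : ℤ)) (fun _ : ℕ => X)), ?_⟩
    rw [← cancel_mono (piComparison (shiftFunctor C (-1 : ℤ)) (fun _ : ℕ => X)),
      Category.assoc, Category.assoc, hconj, IsIso.inv_hom_id_assoc]
    exact ha
  -- injectivity of composition with ι
  have hinj : ∀ {W : C} (f : W ⟶ H), f ≫ ι = 0 → f = 0 := by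
    intro W f hf
    have hT' := inv_rot_of_distTriang _ hT
    obtain ⟨w, hw⟩ : ∃ w : W ⟶ (shiftFunctor C (-1 : ℤ)).obj P,
        f = w ≫ (Triangle.mk ι t δ).invRotate.mor₁ := Triangle.coyoneda_exact₂ _ hT' f (by
      dsimp [Triangle.invRotate]
      exact hf)
    have hz : (shiftFunctor C (-1 : ℤ)).map t ≫ (Triangle.mk ι t δ).invRotate.mor₁ = 0 := by
      have h23 : t ≫ δ = 0 := comp_distTriang_mor_zero₂₃ _ hT
      change (shiftFunctor C (-1 : ℤ)).map t ≫ (-(shiftFunctor C (-1 : ℤ)).map δ ≫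
        (shiftFunctorCompIsoId C (1 : ℤ) (-1) (by omega)).hom.app H) = 0
      rw [Preadditive.comp_neg, ← Category.assoc, ← Functor.map_comp, h23,
        Functor.map_zero, zero_comp, neg_zero]
    obtain ⟨v, hv⟩ := sur w
    rw [hw, ← hv]
    exact (Category.assoc v _ _).trans ((congrArg (fun z => v ≫ z) hz).trans comp_zero)
  have hpg : p ≫ g = ι := by
    apply Pi.hom_ext
    intro n
    rw [Category.assoc, hg, Pi.lift_π, hp, hkey, hconst n]
  have hfinal : p ≫ r = 𝟙 H := by
    have h0 : ((p ≫ r : H ⟶ H) - 𝟙 H) ≫ ι = 0 := by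
      rw [Preadditive.sub_comp, Category.id_comp, Category.assoc, ← hr, hpg, sub_self]
    have := hinj _ h0
    rwa [sub_eq_zero] at this
  refine ⟨H, p, r, hfinal, ?_⟩
  rw [hp, ← Category.assoc, ← hr, hg, Pi.lift_π]


universe w w'

lemma aux_hasProduct_comp [HasZeroMorphisms C] [IsIdempotentComplete C]
    {ι : Type w} {J : Type w'} (g : ι → C) [HasProduct g]
    (m : J → ι) (hm : Function.Injective m) : HasProduct (fun j => g (m j)) := by
  classical
  set e : ∏ᶜ g ⟶ ∏ᶜ g :=
    Pi.lift (fun i => if i ∈ Set.range m then Pi.π g i else 0) with he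
  have hee : e ≫ e = e := by
    apply Pi.hom_ext
    intro i
    rw [Category.assoc, he, Pi.lift_π]
    by_cases h : i ∈ Set.range m
    · rw [if_pos h, Pi.lift_π, if_pos h]
    · rw [if_neg h, comp_zero]
  obtain ⟨Y, iY, q, h1, h2⟩ := IsIdempotentComplete.idempotents_split _ e hee
  let E : ∀ (s : Fan (fun j => g (m j))), s.pt ⟶ ∏ᶜ g := fun s =>
    Pi.lift (fun i => if h : i ∈ Set.range m then
      s.proj h.choose ≫ eqToHom (congrArg g h.choose_spec) else 0)
  have hproj : ∀ (s : Fan (fun j => g (m j))) (j' j : J) (hh : m j' = m j),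
      s.proj j' ≫ eqToHom (congrArg g hh) = s.proj j := by
    intro s j' j hh
    obtain rfl : j' = j := hm hh
    simp
  have hEcomp : ∀ (s : Fan (fun j => g (m j))) (i : ι), E s ≫ Pi.π g i =
      if h : i ∈ Set.range m then s.proj h.choose ≫ eqToHom (congrArg g h.choose_spec)
      else 0 := by
    intro s i
    show Pi.lift _ ≫ Pi.π g i = _
    rw [Pi.lift_π]
  have hEπ : ∀ (s : Fan (fun j => g (m j))) (j : J), E s ≫ Pi.π g (m j) = s.proj j := by
    intro s j
    have hmem : m j ∈ Set.range m := ⟨j, rfl⟩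
    rw [hEcomp, dif_pos hmem, hproj s _ j hmem.choose_spec]
  have hgoal : ∀ i, e ≫ Pi.π g i = if i ∈ Set.range m then Pi.π g i else 0 := by
    intro i
    rw [he, Pi.lift_π]
  have hEe : ∀ (s : Fan (fun j => g (m j))), E s ≫ e = E s := by
    intro s
    apply Pi.hom_ext
    intro i
    rw [Category.assoc, hgoal]
    by_cases h : i ∈ Set.range m
    · rw [if_pos h]
    · rw [if_neg h, comp_zero, hEcomp, dif_neg h]
  have heq : e ≫ q = q := by rw [← h2, Category.assoc, h1, Category.comp_id]
  refine HasLimit.mk ⟨Fan.mk Y (fun j => iY ≫ Pi.π g (m j)), mkFanLimit _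
    (fun s => E s ≫ q) ?_ ?_⟩
  · intro s j
    show (E s ≫ q) ≫ (iY ≫ Pi.π g (m j)) = s.proj j
    have hq : q ≫ (iY ≫ Pi.π g (m j)) = e ≫ Pi.π g (m j) := by
      rw [← Category.assoc, h2]
    rw [Category.assoc, hq, ← Category.assoc, hEe, hEπ]
  · intro s k hk
    have hk' : ∀ j : J, k ≫ (iY ≫ Pi.π g (m j)) = s.proj j := hk
    have key2 : ∀ (j : J) (i : ι) (hh : m j = i),
        k ≫ (iY ≫ Pi.π g i) = s.proj j ≫ eqToHom (congrArg g hh) := by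
      intro j i hh
      subst hh
      rw [eqToHom_refl, Category.comp_id]
      exact hk' j
    have hkey : (k ≫ iY) ≫ e = E s := by
      apply Pi.hom_ext
      intro i
      rw [Category.assoc, Category.assoc, hgoal, hEcomp]
      by_cases h : i ∈ Set.range m
      · rw [if_pos h, dif_pos h]
        exact key2 h.choose i h.choose_spec
      · rw [if_neg h, dif_neg h, comp_zero, comp_zero]
    calc k = k ≫ (iY ≫ q) := by rw [h1]; exact (Category.comp_id k).symm
      _ = ((k ≫ iY) ≫ e) ≫ q := by simp only [Category.assoc, heq]
      _ = E s ≫ q := by rw [hkey]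



universe v2 u2 v3 u3

lemma aux_prodCls_transfer {L : Type u2} [Category.{v2} L] {T : Type u3} [Category.{v3} T]
    [Preadditive L] [IsIdempotentComplete L]
    (U : L ⥤ T) (F : T ⥤ L) (adj : U ⊣ F) (𝒞 : Set T) {X : T} (hX : X ∈ ProdCls 𝒞) :
    F.obj X ∈ ProdCls (F.obj '' 𝒞) := by
  classical
  haveI := adj.rightAdjoint_preservesLimits
  obtain ⟨ι, c, hc, hprod, rT, sT, hrs⟩ := hX
  haveI : HasProduct c := hprod
  haveI hFprod : HasProduct (fun i => F.obj (c i)) :=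
    HasLimit.mk ⟨_, isLimitOfHasProductOfPreservesLimit F c⟩
  set σ : F.obj X ⟶ ∏ᶜ (fun i => F.obj (c i)) := F.map sT ≫ piComparison F c with hσ
  set ρ : (∏ᶜ (fun i => F.obj (c i))) ⟶ F.obj X := inv (piComparison F c) ≫ F.map rT with hρ
  have hσρ : σ ≫ ρ = 𝟙 (F.obj X) := by
    rw [hσ, hρ, Category.assoc, IsIso.hom_inv_id_assoc, ← F.map_comp, hrs, F.map_id]
  let K := (z : (F.obj '' 𝒞 : Set L)) × (F.obj X ⟶ (z : L))
  let k : ι → K := fun i =>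
    ⟨⟨F.obj (c i), ⟨c i, hc i, rfl⟩⟩, σ ≫ Pi.π (fun i => F.obj (c i)) i⟩
  let J := Set.range k
  let m : J → ι := fun j => j.2.choose
  have hmk : ∀ j : J, k (m j) = (j : K) := fun j => j.2.choose_spec
  have hminj : Function.Injective m := by
    intro j j' hjj
    apply Subtype.ext
    rw [← hmk j, ← hmk j', hjj]
  haveI : HasProduct (fun j : J => F.obj (c (m j))) :=
    aux_hasProduct_comp (fun i => F.obj (c i)) m hminj
  have hpair : ∀ (p q : K) (hpq : p = q),
      p.2 ≫ eqToHom (congrArg (fun y : K => (y.1 : L)) hpq) = q.2 := by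
    intro p q hpq
    subst hpq
    simp
  let f : J → L := fun j => F.obj (c (m j))
  let sMap : F.obj X ⟶ ∏ᶜ f := Pi.lift (fun j => σ ≫ Pi.π (fun i => F.obj (c i)) (m j))
  have hEq : ∀ i : ι, f ⟨k i, ⟨i, rfl⟩⟩ = F.obj (c i) := fun i =>
    congrArg (fun y : K => (y.1 : L)) (hmk ⟨k i, ⟨i, rfl⟩⟩)
  let τ : (∏ᶜ f) ⟶ ∏ᶜ (fun i => F.obj (c i)) :=
    Pi.lift (fun i => Pi.π f ⟨k i, ⟨i, rfl⟩⟩ ≫ eqToHom (hEq i))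
  have hsτ : sMap ≫ τ = σ := by
    apply Pi.hom_ext
    intro i
    rw [Category.assoc, Pi.lift_π, ← Category.assoc, Pi.lift_π, Category.assoc]
    rw [← Category.assoc]
    exact hpair (k (m ⟨k i, ⟨i, rfl⟩⟩)) (k i) (hmk ⟨k i, ⟨i, rfl⟩⟩)
  refine ⟨J, f, fun j => ⟨c (m j), hc (m j), rfl⟩, inferInstance, τ ≫ ρ, sMap, ?_⟩
  rw [← Category.assoc, hsτ, hσρ]



end Aux

/-- If `U : L ⥤ T` is a fully faithful triangulated functor with right adjoint `F`, and
every object of `T` is `𝒞`-cofiltered, then every object of `L` is `F(𝒞)`-cofiltered;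
in particular, if `Tᵒᵖ` is deconstructible then so is `Lᵒᵖ`. -/
theorem stmt14 {L : Type u} [Category.{v} L] {T : Type u'} [Category.{v'} T]
    [Preadditive L] [HasZeroObject L] [HasShift L ℤ]
    [∀ n : ℤ, (shiftFunctor L n).Additive] [Pretriangulated L] [HasCountableProducts L]
    [Preadditive T] [HasZeroObject T] [HasShift T ℤ]
    [∀ n : ℤ, (shiftFunctor T n).Additive] [Pretriangulated T] [HasCountableProducts T]
    (U : L ⥤ T) [U.CommShift ℤ] [U.IsTriangulated] [U.Full] [U.Faithful]
    (F : T ⥤ L) [F.CommShift ℤ] [F.IsTriangulated] (adj : U ⊣ F)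
    (𝒞 : Set T) (h : ∀ X : T, IsCofiltered' 𝒞 X) :
    ∀ Y : L, IsCofiltered' (F.obj '' 𝒞) Y := by
  haveI : IsIdempotentComplete L := aux_isIdempotentComplete
  haveI := adj.rightAdjoint_preservesLimits
  haveI : IsIso adj.unit := adj.unit_isIso_of_L_fully_faithful
  intro Y
  haveI : IsIso (adj.unit.app Y) := NatIso.isIso_app_of_isIso adj.unit Y
  obtain ⟨Xs, d, h0, h1, π, δ, hT⟩ := h (U.obj Y)
  refine ⟨fun n => F.obj (Xs n), fun n => F.map (d n),
    aux_prodCls_transfer U F adj 𝒞 h0, ?_, ?_⟩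
  · intro n
    obtain ⟨P, a, b, cc, hb, htri, hP⟩ := h1 n
    exact ⟨F.obj P, F.map a, F.map b,
      F.map cc ≫ (F.commShiftIso (1 : ℤ)).hom.app P, by rw [hb],
      F.map_distinguished _ htri, aux_prodCls_transfer U F adj 𝒞 hP⟩
  · refine ⟨adj.unit.app Y ≫ F.map π ≫ piComparison F Xs,
      inv (piComparison F Xs) ≫ (F.map δ ≫ (F.commShiftIso (1 : ℤ)).hom.app (U.obj Y)) ≫
        (shiftFunctor L (1 : ℤ)).map (inv (adj.unit.app Y)), ?_⟩
    refine Pretriangulated.isomorphic_distinguished _ (F.map_distinguished _ hT) _ ?_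
    have key : F.map (Pi.lift fun n => Pi.π Xs n - (Pi.π Xs (n + 1) ≫ d n)) ≫ piComparison F Xs
        = piComparison F Xs ≫ (Pi.lift fun n =>
            Pi.π (fun n => F.obj (Xs n)) n - (Pi.π (fun n => F.obj (Xs n)) (n + 1) ≫ F.map (d n))) := by
      rw [map_lift_piComparison]
      apply Pi.hom_ext
      intro n
      rw [Pi.lift_π, Category.assoc, Pi.lift_π, Preadditive.comp_sub, piComparison_comp_π,
        ← Category.assoc, piComparison_comp_π, F.map_sub, F.map_comp]
    refine Triangle.isoMk _ _ (asIso (adj.unit.app Y) :) (asIso (piComparison F Xs)).symm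
      (asIso (piComparison F Xs)).symm ?_ ?_ ?_
    · dsimp
      change (adj.unit.app Y ≫ F.map π ≫ piComparison F Xs) ≫ inv (piComparison F Xs) =
        adj.unit.app Y ≫ F.map π
      rw [Category.assoc, Category.assoc, IsIso.hom_inv_id, Category.comp_id]
    · dsimp
      change (Pi.lift fun n => Pi.π (fun n => F.obj (Xs n)) n -
          (Pi.π (fun n => F.obj (Xs n)) (n + 1) ≫ F.map (d n))) ≫ inv (piComparison F Xs) =
        inv (piComparison F Xs) ≫ F.map (Pi.lift fun n => Pi.π Xs n - (Pi.π Xs (n + 1) ≫ d n))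
      rw [← cancel_epi (piComparison F Xs), IsIso.hom_inv_id_assoc, ← Category.assoc, ← key,
        Category.assoc, IsIso.hom_inv_id, Category.comp_id]
    · dsimp
      change (inv (piComparison F Xs) ≫ (F.map δ ≫ (F.commShiftIso (1 : ℤ)).hom.app (U.obj Y)) ≫
          (shiftFunctor L (1 : ℤ)).map (inv (adj.unit.app Y))) ≫
          (shiftFunctor L (1 : ℤ)).map (adj.unit.app Y) =
        inv (piComparison F Xs) ≫ (F.map δ ≫ (F.commShiftIso (1 : ℤ)).hom.app (U.obj Y))
      rw [Category.assoc, Category.assoc, Category.assoc, ← Functor.map_comp,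
        IsIso.inv_hom_id, CategoryTheory.Functor.map_id]
      erw [Category.comp_id]
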